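/- L²-minimality of the equilibrated element solution: let k ≥ 1 and let G, H : ℝ³ → ℝ³ both be of Nédélec form R_k with curl G = curl H everywhere on ℝ³, and suppose ∫_{T̂} H · ∇ψ dx = 0 for every real polynomial ψ of total degree at most k. Then ∫_{T̂} |G|² dx = ∫_{T̂} |H|² dx + ∫_{T̂} |G − H|² dx; in particular ∫_{T̂} |H|² dx ≤ ∫_{T̂} |G|² dx. -/

import Mathlib

open MeasureTheory

/-- Partial derivative of a scalar function on ℝ³ in direction `i`. -/
noncomputable def pd3 (f : (Fin 3 → ℝ) → ℝ) (i : Fin 3) (x : Fin 3 → ℝ) : ℝ :=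
  fderiv ℝ f x (Pi.single i 1)

/-- The curl of a vector field on ℝ³. -/
noncomputable def curl3 (F : (Fin 3 → ℝ) → (Fin 3 → ℝ)) (x : Fin 3 → ℝ) : Fin 3 → ℝ :=
  ![pd3 (fun y => F y 2) 1 x - pd3 (fun y => F y 1) 2 x,
    pd3 (fun y => F y 0) 2 x - pd3 (fun y => F y 2) 0 x,
    pd3 (fun y => F y 1) 0 x - pd3 (fun y => F y 0) 1 x]

/-- The divergence of a vector field on ℝ³. -/
noncomputable def div3 (F : (Fin 3 → ℝ) → (Fin 3 → ℝ)) (x : Fin 3 → ℝ) : ℝ :=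
  ∑ i, pd3 (fun y => F y i) i x

/-- The gradient of a scalar function on ℝ³. -/
noncomputable def grad3 (f : (Fin 3 → ℝ) → ℝ) (x : Fin 3 → ℝ) : Fin 3 → ℝ :=
  fun i => fderiv ℝ f x (Pi.single i 1)

/-- Euclidean dot product on ℝ³. -/
def dot3 (a b : Fin 3 → ℝ) : ℝ := ∑ i, a i * b i

/-- Cross product on ℝ³. -/
def cross3 (a b : Fin 3 → ℝ) : Fin 3 → ℝ :=
  ![a 1 * b 2 - a 2 * b 1, a 2 * b 0 - a 0 * b 2, a 0 * b 1 - a 1 * b 0]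

/-- `f` is (the evaluation of) a real polynomial in three variables of total degree ≤ k. -/
def IsPolyFun3 (k : ℕ) (f : (Fin 3 → ℝ) → ℝ) : Prop :=
  ∃ p : MvPolynomial (Fin 3) ℝ, p.totalDegree ≤ k ∧ ∀ x, f x = MvPolynomial.eval x p

/-- `A` is of Nédélec form `R_k`: `A x = a x + x × b x` with the components of `a, b`
polynomials of total degree at most `k - 1`. -/
def IsNedelec (k : ℕ) (A : (Fin 3 → ℝ) → (Fin 3 → ℝ)) : Prop :=
  ∃ a b : (Fin 3 → ℝ) → (Fin 3 → ℝ),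
    (∀ i, IsPolyFun3 (k - 1) (fun x => a x i)) ∧
    (∀ i, IsPolyFun3 (k - 1) (fun x => b x i)) ∧
    ∀ x, A x = a x + cross3 x (b x)

/-- `u` is of Raviart–Thomas form `D_k`: `u x = v x + (w x) • x` with the components of `v`
and the scalar `w` polynomials of total degree at most `k - 1`. -/
def IsRT (k : ℕ) (u : (Fin 3 → ℝ) → (Fin 3 → ℝ)) : Prop :=
  ∃ (v : (Fin 3 → ℝ) → (Fin 3 → ℝ)) (w : (Fin 3 → ℝ) → ℝ),
    (∀ i, IsPolyFun3 (k - 1) (fun x => v x i)) ∧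
    IsPolyFun3 (k - 1) w ∧
    ∀ x, u x = v x + w x • x

/-- The standard reference tetrahedron in ℝ³. -/
def refTet : Set (Fin 3 → ℝ) := {x | (∀ i, 0 ≤ x i) ∧ ∑ i, x i ≤ 1}

/-!
`G - H` is a polynomial vector field with vanishing curl, hence the gradient of a polynomial `ψ`
(Poincaré lemma, via the Euler operator). Because `x ⬝ (x × b) = 0`, the radial component
`x ⬝ (G - H)` only involves the parts `a` of degree `k - 1`, so `ψ` has degree at most `k`. The
orthogonality hypothesis applied to `ψ` gives `∫ H ⬝ (G - H) = 0`, and the identity is Pythagoras.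
-/

open Matrix

namespace MvPolynomial

variable {σ : Type*}

section Algebra

variable {R : Type*}

theorem pderiv_pderiv_comm [CommRing R] (i j : σ) (p : MvPolynomial σ R) :
    pderiv i (pderiv j p) = pderiv j (pderiv i p) := by
  classical
  have h : ⁅pderiv i, pderiv j⁆ = (0 : Derivation R (MvPolynomial σ R) (MvPolynomial σ R)) :=
    derivation_ext fun k => by rw [Derivation.commutator_apply]; simp [Pi.single_apply, apply_ite]
  simpa [Derivation.commutator_apply, sub_eq_zero] using congr($h p)

variable [Fintype σ]

noncomputable def euler [CommSemiring R] (p : MvPolynomial σ R) : MvPolynomial σ R :=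
  ∑ i, X i * pderiv i p

theorem coeff_euler [CommSemiring R] (p : MvPolynomial σ R) (s : σ →₀ ℕ) :
    coeff s (euler p) = s.degree * coeff s p := by
  classical
  induction p using MvPolynomial.induction_on' with
  | monomial m a =>
    rw [euler, Finset.sum_congr rfl fun i _ => X_mul_pderiv_monomial, ← Finset.sum_smul,
      ← m.degree_eq_sum, coeff_smul]
    simp only [coeff_monomial]
    split_ifs with h <;> simp [h]
  | add p q hp hq =>
    simp only [euler, map_add, mul_add, Finset.sum_add_distrib, coeff_add] at hp hq ⊢
    rw [hp, hq]

theorem pderiv_euler [CommRing R] (i : σ) (p : MvPolynomial σ R) :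
    pderiv i (euler p) = euler (pderiv i p) + pderiv i p := by
  classical
  simp [euler, pderiv_pderiv_comm i, Finset.sum_add_distrib, Pi.single_apply, add_comm]

theorem pderiv_sum_X_mul [CommRing R] {p : σ → MvPolynomial σ R}
    (hp : ∀ i j, pderiv i (p j) = pderiv j (p i)) (i : σ) :
    pderiv i (∑ j, X j * p j) = euler (p i) + p i := by
  classical
  simp [euler, hp i, Finset.sum_add_distrib, Pi.single_apply, add_comm]

variable [Field R] [CharZero R]

theorem euler_add_self_injective :
    Function.Injective fun p : MvPolynomial σ R => euler p + p := by
  intro p q h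
  ext s
  have hs := congr(coeff s $h)
  simp only [coeff_add, coeff_euler] at hs
  apply mul_left_cancel₀ (Nat.cast_add_one_ne_zero s.degree : (s.degree : R) + 1 ≠ 0)
  linear_combination hs

theorem exists_euler_eq {q : MvPolynomial σ R} (hq : coeff 0 q = 0) :
    ∃ ψ, euler ψ = q ∧ ψ.totalDegree ≤ q.totalDegree := by
  classical
  set ψ := ∑ s ∈ q.support, monomial s (coeff s q / s.degree)
  have hψ (s) : coeff s ψ = coeff s q / s.degree := by
    rw [coeff_sum, Finset.sum_eq_single s (fun t _ hts => by simp [coeff_monomial, hts])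
      (fun hs => by simp [notMem_support_iff.mp hs])]
    simp
  refine ⟨ψ, ?_, totalDegree_le_of_support_subset fun s => ?_⟩
  · ext s
    rw [coeff_euler, hψ]
    rcases eq_or_ne s 0 with rfl | hs
    · simp [hq]
    · exact mul_div_cancel₀ _ (by simpa [Finsupp.degree_eq_zero_iff] using hs)
  · simp only [mem_support_iff, hψ]
    exact fun h => (div_ne_zero_iff.mp h).1

/-- Poincaré lemma for polynomial vector fields: `ψ = E⁻¹ (∑ xⱼ pⱼ)`, where `E` is the Euler
operator, is a potential, since `(E + 1) ∂ᵢψ = ∂ᵢ (Eψ) = (E + 1) pᵢ` for a closed field. -/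
theorem exists_pderiv_eq_of_pderiv_symm {p : σ → MvPolynomial σ R}
    (hp : ∀ i j, pderiv i (p j) = pderiv j (p i)) :
    ∃ ψ, (∀ i, pderiv i ψ = p i) ∧ ψ.totalDegree ≤ (∑ j, X j * p j).totalDegree := by
  obtain ⟨ψ, hψ, hdeg⟩ := exists_euler_eq (q := ∑ j, X j * p j) (by
    simp only [coeff_sum, ← constantCoeff_eq]
    simp)
  refine ⟨ψ, fun i => euler_add_self_injective ?_, hdeg⟩
  dsimp only
  rw [← pderiv_euler, hψ, pderiv_sum_X_mul hp]

end Algebra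

section Calculus

variable {𝕜 : Type*} [Fintype σ] [NontriviallyNormedField 𝕜]

theorem hasFDerivAt_eval (p : MvPolynomial σ 𝕜) (x : σ → 𝕜) :
    HasFDerivAt (fun y => eval y p)
      (∑ j, eval x (pderiv j p) • (ContinuousLinearMap.proj j : (σ → 𝕜) →L[𝕜] 𝕜)) x := by
  induction p using MvPolynomial.induction_on with
  | C a =>
    simp only [eval_C]
    exact (hasFDerivAt_const a x).congr_fderiv (by ext; simp)
  | add p q hp hq =>
    simp only [eval_add]
    exact (hp.add hq).congr_fderiv (by ext; simp [add_mul, Finset.sum_add_distrib])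
  | mul_X p n hp =>
    classical
    simp only [eval_mul, eval_X]
    refine (hp.mul ((ContinuousLinearMap.proj n : (σ → 𝕜) →L[𝕜] 𝕜).hasFDerivAt)).congr_fderiv ?_
    ext
    simp [Pi.single_apply, apply_ite, mul_add, Finset.sum_add_distrib, Finset.mul_sum,
      mul_left_comm, mul_comm]

theorem fderiv_eval_apply_single [DecidableEq σ] (p : MvPolynomial σ 𝕜) (x : σ → 𝕜) (i : σ) :
    fderiv 𝕜 (fun y => eval y p) x (Pi.single i 1) = eval x (pderiv i p) := by
  simp [(hasFDerivAt_eval p x).fderiv, Pi.single_apply]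

end Calculus

end MvPolynomial

section Pythagoras

variable {α ι : Type*} [Fintype ι] [TopologicalSpace α] [T2Space α] [MeasurableSpace α]
  [OpensMeasurableSpace α] {μ : Measure α} [IsFiniteMeasureOnCompacts μ] {s : Set α}
  {u v : α → ι → ℝ}

theorem setIntegral_dotProduct_self_eq_add_of_orthogonal (hs : IsCompact s) (hu : Continuous u)
    (hv : Continuous v) (horth : ∫ x in s, v x ⬝ᵥ (u x - v x) ∂μ = 0) :
    ∫ x in s, u x ⬝ᵥ u x ∂μ
      = (∫ x in s, v x ⬝ᵥ v x ∂μ) + ∫ x in s, (u x - v x) ⬝ᵥ (u x - v x) ∂μ := by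
  have hint {f g : α → ι → ℝ} (hf : Continuous f) (hg : Continuous g) :
      IntegrableOn (fun x => f x ⬝ᵥ g x) s μ :=
    (hf.dotProduct hg).continuousOn.integrableOn_compact hs
  have huv : Continuous fun x => u x - v x := hu.sub hv
  have hvv := hint hv hv
  have hvw := (hint hv huv).const_mul 2
  have hww := hint huv huv
  have hexpand (x : α) : u x ⬝ᵥ u x
      = (v x ⬝ᵥ v x + 2 * v x ⬝ᵥ (u x - v x)) + (u x - v x) ⬝ᵥ (u x - v x) := by
    simp only [sub_dotProduct, dotProduct_sub, dotProduct_comm (u x) (v x)]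
    ring
  simp_rw [hexpand]
  rw [integral_add (f := fun x => v x ⬝ᵥ v x + 2 * v x ⬝ᵥ (u x - v x)) (hvv.add hvw) hww,
    integral_add hvv hvw, integral_const_mul, horth, mul_zero, add_zero]

theorem setIntegral_dotProduct_self_le_of_orthogonal (hs : IsCompact s) (hu : Continuous u)
    (hv : Continuous v) (horth : ∫ x in s, v x ⬝ᵥ (u x - v x) ∂μ = 0) :
    ∫ x in s, v x ⬝ᵥ v x ∂μ ≤ ∫ x in s, u x ⬝ᵥ u x ∂μ := by
  rw [setIntegral_dotProduct_self_eq_add_of_orthogonal hs hu hv horth]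
  exact le_add_of_nonneg_right <| integral_nonneg fun x =>
    Finset.sum_nonneg fun i _ => mul_self_nonneg _

end Pythagoras

theorem isCompact_refTet : IsCompact refTet := by
  have hclosed : IsClosed refTet := by
    simp only [refTet, Set.ofPred_and, Set.ofPred_forall]
    exact (isClosed_iInter fun i => isClosed_le continuous_const (continuous_apply i)).inter
      (isClosed_le (continuous_finsetSum _ fun i _ => continuous_apply i) continuous_const)
  refine (isCompact_Icc (a := 0) (b := 1)).of_isClosed_subset hclosed fun x hx =>
    ⟨hx.1, fun i => ?_⟩
  exact (Finset.single_le_sum (fun j _ => hx.1 j) (Finset.mem_univ i)).trans hx.2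

open MvPolynomial

theorem pd3_eval (p : MvPolynomial (Fin 3) ℝ) (i : Fin 3) (x : Fin 3 → ℝ) :
    pd3 (fun y => eval y p) i x = eval x (pderiv i p) :=
  fderiv_eval_apply_single p x i

theorem pderiv_symm_of_curl3_eq {P Q : Fin 3 → MvPolynomial (Fin 3) ℝ}
    (h : ∀ x, curl3 (fun y j => eval y (P j)) x = curl3 (fun y j => eval y (Q j)) x)
    (i j : Fin 3) :
    pderiv i ((P - Q) j) = pderiv j ((P - Q) i) := by
  refine MvPolynomial.funext fun x => ?_
  have h0 := congrFun (h x) 0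
  have h1 := congrFun (h x) 1
  have h2 := congrFun (h x) 2
  simp only [curl3, pd3_eval, cons_val_zero, cons_val_one, cons_val] at h0 h1 h2
  fin_cases i <;> fin_cases j <;>
    simp only [Fin.zero_eta, Fin.mk_one, Fin.reduceFinMk, Fin.isValue, Pi.sub_apply, map_sub] <;>
    linarith

theorem totalDegree_X_mul_le {R σ : Type*} [CommSemiring R] [Nontrivial R] (i : σ)
    (f : MvPolynomial σ R) : (X i * f).totalDegree ≤ f.totalDegree + 1 :=
  (totalDegree_mul _ _).trans_eq (by rw [totalDegree_X, add_comm])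

/-- The radial component `x ⬝ A x` has degree `k`, not `k + 1`, since `x ⬝ (x × b) = 0`. -/
theorem IsNedelec.exists_eq_eval {k : ℕ} (hk : 1 ≤ k) {A : (Fin 3 → ℝ) → (Fin 3 → ℝ)}
    (hA : IsNedelec k A) :
    ∃ P : Fin 3 → MvPolynomial (Fin 3) ℝ,
      (∑ j, X j * P j).totalDegree ≤ k ∧ A = fun x j => eval x (P j) := by
  obtain ⟨a, b, ha, hb, hA⟩ := hA
  choose pa hpa_deg hpa using ha
  choose pb _ hpb using hb
  refine ⟨pa + (fun j => X j) ⨯₃ pb, ?_, ?_⟩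
  · have hradial : ∑ j, X j * (pa + (fun j => X j) ⨯₃ pb) j = ∑ j, X j * pa j := by
      simpa [dotProduct, mul_add, Finset.sum_add_distrib] using
        dot_self_cross (fun j => (X j : MvPolynomial (Fin 3) ℝ)) pb
    rw [hradial]
    exact (totalDegree_finsetSum _ _).trans <| Finset.sup_le fun j _ =>
      (totalDegree_X_mul_le j (pa j)).trans (Nat.add_le_of_le_sub hk (hpa_deg j))
  · ext x j
    rw [hA x]
    fin_cases j <;> simp [cross3, cross_apply, hpa, hpb]

theorem equilibrated_solution_l2_minimal (k : ℕ) (hk : 1 ≤ k)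
    (G H : (Fin 3 → ℝ) → (Fin 3 → ℝ)) (hG : IsNedelec k G) (hH : IsNedelec k H)
    (hcurl : ∀ x, curl3 G x = curl3 H x)
    (horth : ∀ ψ : MvPolynomial (Fin 3) ℝ, ψ.totalDegree ≤ k →
      ∫ x in refTet, dot3 (H x) (grad3 (fun y => MvPolynomial.eval y ψ) x) = 0) :
    (∫ x in refTet, dot3 (G x) (G x)
      = (∫ x in refTet, dot3 (H x) (H x)) + ∫ x in refTet, dot3 (G x - H x) (G x - H x)) ∧
    ∫ x in refTet, dot3 (H x) (H x) ≤ ∫ x in refTet, dot3 (G x) (G x) := by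
  obtain ⟨PG, hPG, rfl⟩ := hG.exists_eq_eval hk
  obtain ⟨PH, hPH, rfl⟩ := hH.exists_eq_eval hk
  obtain ⟨ψ, hψ, hψdeg⟩ := exists_pderiv_eq_of_pderiv_symm (pderiv_symm_of_curl3_eq hcurl)
  have hgrad (x) :
      grad3 (fun y => eval y ψ) x = (fun j => eval x (PG j)) - fun j => eval x (PH j) := by
    ext i
    simp [grad3, fderiv_eval_apply_single, hψ]
  have hdeg : ψ.totalDegree ≤ k := by
    refine hψdeg.trans ?_
    simp only [Pi.sub_apply, mul_sub, Finset.sum_sub_distrib]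
    exact (totalDegree_sub _ _).trans (max_le hPG hPH)
  have hcont (P : Fin 3 → MvPolynomial (Fin 3) ℝ) : Continuous fun x j => eval x (P j) :=
    continuous_pi fun j => continuous_eval _
  have horthψ := horth ψ hdeg
  simp only [hgrad] at horthψ
  exact ⟨setIntegral_dotProduct_self_eq_add_of_orthogonal isCompact_refTet (hcont PG) (hcont PH)
      horthψ, setIntegral_dotProduct_self_le_of_orthogonal isCompact_refTet (hcont PG) (hcont PH)
      horthψ⟩
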